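/- arXiv:math/0404219 — 5 statements merged into one kernel-verified Lean document; each statement's English description precedes it below -/
import Mathlib

section
/- Let R be an integral domain, G a finite group, and M a left R[G]-module which is finitely generated and projective as an R-module. If M is projective as an R[G]-module, then M^G = σ•M; that is, every G-invariant element of M equals σ•m for some m ∈ M, and conversely σ•m is G-invariant for every m ∈ M. -/
/-!
An element `f` of `k[G]` with `g * f = f` for all `g` has constant coefficients, so it is
`σ * f(1)`. Invariance in a free `k[G]`-module is checked coefficientwise, so there every
invariant is a `σ`-multiple too; and a projective module is a retract of a free one, by maps
commuting with `σ`.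
-/

open MonoidAlgebra

namespace MonoidAlgebra

variable {k G : Type*} [Semiring k] [Group G] [Fintype G]

theorem sum_of_mul_single_coeff_one {f : k[G]} (hf : ∀ g, of k G g * f = f) :
    (∑ g : G, of k G g) * single 1 (f.coeff 1) = f := by
  classical
  ext h
  have hfh : f.coeff h = f.coeff 1 := by
    simpa using (congrArg (fun x : k[G] => x.coeff h) (hf h)).symm
  simp [Finset.sum_mul, single_mul_single, coeff_sum, Finsupp.single_apply, hfh]

theorem exists_sum_of_smul_eq_of_free {X : Type*} {v : X →₀ k[G]}
    (hv : ∀ g, of k G g • v = v) : ∃ w, (∑ g : G, of k G g) • w = v :=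
  ⟨v.mapRange (fun f => single 1 (f.coeff 1)) (by simp), by
    ext1 x
    exact sum_of_mul_single_coeff_one fun g => congrArg (· x) (hv g)⟩

theorem exists_sum_of_smul_eq_of_projective {P : Type*} [AddCommMonoid P]
    [Module k[G] P] [Module.Projective k[G] P] {p : P}
    (hp : ∀ g, of k G g • p = p) : ∃ q, (∑ g : G, of k G g) • q = p := by
  obtain ⟨s, hs⟩ := Module.Projective.out (R := k[G]) (P := P)
  obtain ⟨w, hw⟩ := exists_sum_of_smul_eq_of_free (v := s p) fun g => by
    rw [← map_smul, hp g]
  exact ⟨Finsupp.linearCombination k[G] id w, by rw [← map_smul, hw, hs p]⟩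

end MonoidAlgebra

namespace Representation

variable {k G V : Type*} [CommRing k] [Group G] [Fintype G] [AddCommGroup V] [Module k V]
  (ρ : Representation k G V)

theorem asModuleEquiv_sum_of_smul (v : ρ.asModule) :
    ρ.asModuleEquiv ((∑ g : G, of k G g) • v) = ρ.norm (ρ.asModuleEquiv v) := by
  rw [asModuleEquiv_map_smul, map_sum]
  simp only [asAlgebraHom_of, norm]

theorem invariants_eq_range_norm_of_projective [Module.Projective k[G] ρ.asModule] :
    ρ.invariants = LinearMap.range ρ.norm := by
  ext v
  constructor
  · intro hv
    obtain ⟨q, hq⟩ := exists_sum_of_smul_eq_of_projective (p := ρ.asModuleEquiv.symm v)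
      fun g => by
        rw [of_apply, single_smul, one_smul, LinearEquiv.apply_symm_apply, hv g]; rfl
    exact ⟨ρ.asModuleEquiv q, by rw [← asModuleEquiv_sum_of_smul, hq]; simp⟩
  · rintro ⟨w, rfl⟩ g
    exact ρ.self_norm_apply g w

end Representation

theorem invariants_eq_range_sigma_smul_general
    {R : Type*} [CommRing R]
    {G : Type*} [Group G] [Fintype G]
    {M : Type*} [AddCommGroup M] [Module R M]
    (ρ : Representation R G M)
    (hprojRG : Module.Projective (MonoidAlgebra R G) ρ.asModule) :
    (ρ.invariants : Set M) = Set.range (fun m : M => ∑ g : G, ρ g m) := by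
  rw [ρ.invariants_eq_range_norm_of_projective, LinearMap.coe_range]
  congr 1 with m
  exact LinearMap.sum_apply _ _ m

/-- For an integral domain `R`, a finite group `G`, and a left `R[G]`-module `M`
(finitely generated and projective over `R`) which is projective as an `R[G]`-module,
the invariants `M^G` coincide with `σ • M` where `σ = ∑ g ∈ G, g`. -/
theorem invariants_eq_range_sigma_smul
    {R : Type*} [CommRing R] [IsDomain R]
    {G : Type*} [Group G] [Fintype G]
    {M : Type*} [AddCommGroup M] [Module R M]
    (ρ : Representation R G M)
    (hfin : Module.Finite R M) (hprojR : Module.Projective R M)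
    (hprojRG : Module.Projective (MonoidAlgebra R G) ρ.asModule) :
    (ρ.invariants : Set M) = Set.range (fun m : M => ∑ g : G, ρ g m) :=
  invariants_eq_range_sigma_smul_general ρ hprojRG
end

section
/- Let R be an integral domain, G a finite group, and let M and N be left R[G]-modules. Assume that M and N are both projective as R-modules and that at least one of M or N is projective as an R[G]-module. Then M ⊗_R N, endowed with the diagonal action of G (i.e. g•(m ⊗ n) = (g•m) ⊗ (g•n)), is a projective R[G]-module. -/
/-!
Higman's criterion: a `k[G]`-module `V` that is projective over `k` is projective over `k[G]`
if and only if `id_V = ∑_g g f g⁻¹` for some `k`-linear `f : V → V`. Induced modules `k[G] ⊗ V`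
satisfy it with `f` the projection onto `1 ⊗ V`, and the condition passes to direct summands, which
gives necessity; conversely, averaging `v ↦ 1 ⊗ f v` over `G` yields a `k[G]`-linear section of
the action map `k[G] ⊗ V → V`. If `f` witnesses the criterion for `M`, then `f ⊗ id` witnesses
it for `M ⊗ N` with the diagonal action, since `g (f ⊗ id) g⁻¹ = (g f g⁻¹) ⊗ id`.
-/

open scoped TensorProduct
open MonoidAlgebra

namespace TensorProduct.AlgebraTensorModule

variable (R A M : Type*) [CommSemiring R] [Semiring A] [Algebra R A]
  [AddCommMonoid M] [Module R M] [Module A M] [IsScalarTower R A M]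

noncomputable def smulMap : A ⊗[R] M →ₗ[A] M :=
  lift (LinearMap.toSpanSingleton A _ LinearMap.id)

variable {R A M}

@[simp]
theorem smulMap_tmul (a : A) (m : M) : smulMap R A M (a ⊗ₜ m) = a • m := rfl

end TensorProduct.AlgebraTensorModule

open TensorProduct.AlgebraTensorModule (smulMap)

namespace LinearMap

variable {k : Type*} [CommRing k] (G : Type*) [Group G] [Fintype G]

variable (k) in
theorem exists_sumOfConjugates_eq_id_tensorProduct (V : Type*) [AddCommGroup V] [Module k V] :
    ∃ f : k[G] ⊗[k] V →ₗ[k] k[G] ⊗[k] V, f.sumOfConjugates G = LinearMap.id := by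
  refine ⟨(lsingle 1 ∘ₗ Finsupp.lapply 1 ∘ₗ (coeffLinearEquiv k).toLinearMap).rTensor V, ?_⟩
  ext g v
  simp only [TensorProduct.AlgebraTensorModule.curry_apply, TensorProduct.curry_apply,
    coe_restrictScalars, lsingle_apply, id_apply, sumOfConjugates_apply, conjugate_apply,
    TensorProduct.smul_tmul', smul_eq_mul, single_mul_single, rTensor_tmul, coe_comp,
    Function.comp_apply, LinearEquiv.coe_coe]
  rw [Finset.sum_eq_single g⁻¹]
  · simp
  · intro h _ hne
    simp [mul_eq_one_iff_eq_inv, hne]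
  · simp

variable {U V W : Type*} [AddCommGroup U] [Module k U] [Module k[G] U] [IsScalarTower k k[G] U]
  [AddCommGroup V] [Module k V] [Module k[G] V] [IsScalarTower k k[G] V]
  [AddCommGroup W] [Module k W] [Module k[G] W] [IsScalarTower k k[G] W]

theorem sumOfConjugates_restrictScalars_comp (p : W →ₗ[k[G]] V) (f : U →ₗ[k] W) :
    (p.restrictScalars k ∘ₗ f).sumOfConjugates G = p.restrictScalars k ∘ₗ f.sumOfConjugates G := by
  ext u
  simp [sumOfConjugates_apply, conjugate_apply]

theorem sumOfConjugates_comp_restrictScalars (f : W →ₗ[k] V) (i : U →ₗ[k[G]] W) :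
    (f ∘ₗ i.restrictScalars k).sumOfConjugates G = f.sumOfConjugates G ∘ₗ i.restrictScalars k := by
  ext u
  simp [sumOfConjugates_apply, conjugate_apply]

variable (k) in
theorem exists_sumOfConjugates_eq_id [Module.Projective k[G] V] :
    ∃ f : V →ₗ[k] V, f.sumOfConjugates G = LinearMap.id := by
  obtain ⟨s, hs⟩ := Module.projective_lifting_property (smulMap k k[G] V) LinearMap.id
    fun v => ⟨1 ⊗ₜ v, by simp⟩
  obtain ⟨f, hf⟩ := exists_sumOfConjugates_eq_id_tensorProduct k G V
  refine ⟨(smulMap k k[G] V).restrictScalars k ∘ₗ f ∘ₗ s.restrictScalars k, ?_⟩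
  rw [sumOfConjugates_restrictScalars_comp, sumOfConjugates_comp_restrictScalars, hf, id_comp,
    ← restrictScalars_comp, hs, restrictScalars_id]

theorem projective_of_sumOfConjugates_eq_id [Module.Projective k V] (f : V →ₗ[k] V)
    (hf : f.sumOfConjugates G = LinearMap.id) : Module.Projective k[G] V := by
  let s : V →ₗ[k] k[G] ⊗[k] V := TensorProduct.mk k k[G] V 1 ∘ₗ f
  have hsf : (smulMap k k[G] V).restrictScalars k ∘ₗ s = f := by
    ext v
    simp [s]
  have hs : (smulMap k k[G] V).restrictScalars k ∘ₗ s.sumOfConjugates G = LinearMap.id := by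
    rw [← sumOfConjugates_restrictScalars_comp, hsf, hf]
  exact .of_split (s.sumOfConjugatesEquivariant G) (smulMap k k[G] V)
    (LinearMap.ext fun v => LinearMap.congr_fun hs v)

end LinearMap

namespace Representation

variable {k G V W : Type*} [CommRing k] [Group G] [Fintype G]
  [AddCommGroup V] [Module k V] [AddCommGroup W] [Module k W]
  (ρ : Representation k G V) (σ : Representation k G W)

theorem sumOfConjugates_conj_asModuleEquiv_symm (f : V →ₗ[k] V) :
    (ρ.asModuleEquiv.symm.conj f).sumOfConjugates G =
      ρ.asModuleEquiv.symm.conj ((linHom ρ ρ).norm f) := by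
  ext v
  simp [LinearMap.sumOfConjugates_apply, LinearMap.conjugate_apply, norm, linHom_apply,
    LinearEquiv.conj_apply_apply]
  exact Fintype.sum_equiv (Equiv.inv G) _ _ fun g => by simp only [Equiv.inv_apply, inv_inv]; rfl

theorem projective_asModule_iff [Module.Projective k V] :
    Module.Projective k[G] ρ.asModule ↔ ∃ f : V →ₗ[k] V, (linHom ρ ρ).norm f = LinearMap.id := by
  have : Module.Projective k ρ.asModule := .of_equiv ρ.asModuleEquiv.symm
  constructor
  · intro _
    obtain ⟨f, hf⟩ := LinearMap.exists_sumOfConjugates_eq_id k G (V := ρ.asModule)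
    refine ⟨ρ.asModuleEquiv.conj f, ρ.asModuleEquiv.symm.conj.injective ?_⟩
    rw [← sumOfConjugates_conj_asModuleEquiv_symm, LinearEquiv.conj_symm_conj, hf,
      LinearEquiv.conj_id]
  · rintro ⟨f, hf⟩
    refine LinearMap.projective_of_sumOfConjugates_eq_id G (ρ.asModuleEquiv.symm.conj f) ?_
    rw [sumOfConjugates_conj_asModuleEquiv_symm, hf, LinearEquiv.conj_id]

theorem norm_linHom_tprod_rTensor (f : V →ₗ[k] V) :
    (linHom (ρ.tprod σ) (ρ.tprod σ)).norm (f.rTensor W) = ((linHom ρ ρ).norm f).rTensor W := by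
  refine TensorProduct.ext' fun v w => ?_
  simp [norm, linHom_apply, tprod_apply, TensorProduct.sum_tmul]

theorem norm_linHom_tprod_lTensor (f : W →ₗ[k] W) :
    (linHom (ρ.tprod σ) (ρ.tprod σ)).norm (f.lTensor V) = ((linHom σ σ).norm f).lTensor V := by
  refine TensorProduct.ext' fun v w => ?_
  simp [norm, linHom_apply, tprod_apply, TensorProduct.tmul_sum]

end Representation

theorem tensor_diagonal_projective_general
    {R : Type*} [CommRing R]
    {G : Type*} [Group G] [Fintype G]
    {M : Type*} [AddCommGroup M] [Module R M]
    {N : Type*} [AddCommGroup N] [Module R N]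
    (ρM : Representation R G M) (ρN : Representation R G N)
    (hM : Module.Projective R M) (hN : Module.Projective R N)
    (h : Module.Projective (MonoidAlgebra R G) ρM.asModule ∨
         Module.Projective (MonoidAlgebra R G) ρN.asModule) :
    Module.Projective (MonoidAlgebra R G) (ρM.tprod ρN).asModule := by
  rw [Representation.projective_asModule_iff]
  rcases h with hP | hP
  · obtain ⟨f, hf⟩ := ρM.projective_asModule_iff.mp hP
    exact ⟨f.rTensor N, by rw [ρM.norm_linHom_tprod_rTensor, hf, LinearMap.rTensor_id]⟩
  · obtain ⟨f, hf⟩ := ρN.projective_asModule_iff.mp hP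
    exact ⟨f.lTensor M, by rw [ρM.norm_linHom_tprod_lTensor, hf, LinearMap.lTensor_id]⟩

/-- Let `R` be an integral domain, `G` a finite group, and `M`, `N` left
`R[G]`-modules which are projective over `R` and such that at least one of them is projective
over `R[G]`.  Then `M ⊗_R N`, with the diagonal `G`-action, is projective over `R[G]`. -/
theorem tensor_diagonal_projective
    {R : Type*} [CommRing R] [IsDomain R]
    {G : Type*} [Group G] [Fintype G]
    {M : Type*} [AddCommGroup M] [Module R M]
    {N : Type*} [AddCommGroup N] [Module R N]
    (ρM : Representation R G M) (ρN : Representation R G N)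
    (hM : Module.Projective R M) (hN : Module.Projective R N)
    (h : Module.Projective (MonoidAlgebra R G) ρM.asModule ∨
         Module.Projective (MonoidAlgebra R G) ρN.asModule) :
    Module.Projective (MonoidAlgebra R G) (ρM.tprod ρN).asModule :=
  tensor_diagonal_projective_general ρM ρN hM hN h
end

section
/- Let R be an integral domain, G a finite group, and M a left R[G]-module which is finitely generated and projective as an R-module and projective as an R[G]-module. Let G act on Hom_R(M, R) by (g•f)(m) = f(g⁻¹•m). Then for every G-invariant f ∈ Hom_R(M, R) there is a unique R-linear functional f' on M^G with f'(σ•m) = f(m) for all m ∈ M, and the assignment f ↦ f' is an R-module isomorphism from (Hom_R(M, R))^G onto Hom_R(M^G, R). -/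
/-!
Write `σ = ∑ g, g ∈ R[G]`. In `R[G]` itself, an element fixed by every `g` has constant
coefficients and so is a multiple of `σ`, while the coefficient of `1` in `σ a` is the augmentation
`∑ g, a g`. Transporting both facts along a splitting `M → R[G]^(M)` of the projective `M` shows that
the norm map `N = ∑ g, ρ g : M → M^G` is surjective and that every `G`-invariant functional, which
satisfies `f (a • m) = (∑ g, a g) • f m`, vanishes on `ker N`. Hence precomposition with `N` maps
`Hom_R(M^G, R)` injectively onto the functionals vanishing on `ker N`, and these are exactly the
invariant ones.
-/

open MonoidAlgebra

namespace MonoidAlgebra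

variable {R G : Type*} [CommSemiring R] [Group G] [Fintype G]

theorem coeff_one_sum_single_one_mul (a : R[G]) :
    ((∑ g : G, single g (1 : R)) * a).coeff 1 = ∑ g : G, a.coeff g := by
  rw [Finset.sum_mul, coeff_sum, Finsupp.finsetSum_apply]
  exact Fintype.sum_equiv (Equiv.inv G) _ _ fun g => by simp

theorem eq_sum_single_one_mul_of_forall_single_one_mul_eq (a : R[G])
    (ha : ∀ g : G, single g (1 : R) * a = a) :
    a = (∑ g : G, single g (1 : R)) * single 1 (a.coeff 1) := by
  have hconst (g : G) : a.coeff g = a.coeff 1 := by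
    conv_lhs => rw [← ha g]
    simp
  ext h
  simp [Finset.sum_mul, single_mul_single, coeff_sum, hconst]

variable {P N : Type*} [AddCommMonoid P] [Module R[G] P] [AddCommMonoid N] [Module R N]

theorem map_smul_eq_sum_coeff_smul [Module R P] [IsScalarTower R R[G] P] (f : P →ₗ[R] N)
    (hf : ∀ (g : G) (y : P), f (single g (1 : R) • y) = f y) (a : R[G]) (y : P) :
    f (a • y) = (∑ g : G, a.coeff g) • f y := by
  conv_lhs => rw [← a.sum_coeff_single, Finsupp.sum_fintype _ _ (by simp)]
  rw [Finset.sum_smul, map_sum, Finset.sum_smul]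
  refine Finset.sum_congr rfl fun g _ => ?_
  have hsingle : single g (a.coeff g) = a.coeff g • single g (1 : R) := by
    rw [MonoidAlgebra.smul_single, smul_eq_mul, mul_one]
  rw [hsingle, smul_assoc, f.map_smul, hf]

variable [Module.Projective R[G] P]

theorem exists_sum_single_one_smul_eq (x : P) (hx : ∀ g : G, single g (1 : R) • x = x) :
    ∃ y : P, (∑ g : G, single g (1 : R)) • y = x := by
  obtain ⟨s, hs⟩ := Module.projective_def.mp ‹Module.Projective R[G] P›
  let c : P →₀ R[G] := (s x).mapRange (fun a => single 1 (a.coeff 1)) (by simp)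
  have hsx : s x = (∑ g : G, single g (1 : R)) • c := by
    ext1 n
    refine eq_sum_single_one_mul_of_forall_single_one_mul_eq _ fun g => ?_
    rw [← smul_eq_mul, ← Finsupp.smul_apply, ← map_smul, hx]
  exact ⟨Finsupp.linearCombination R[G] id c, by rw [← map_smul, ← hsx, hs x]⟩

theorem map_eq_zero_of_sum_single_one_smul_eq_zero [Module R P] [IsScalarTower R R[G] P]
    (f : P →ₗ[R] N) (hf : ∀ (g : G) (y : P), f (single g (1 : R) • y) = f y) {x : P}
    (hx : (∑ g : G, single g (1 : R)) • x = 0) : f x = 0 := by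
  obtain ⟨s, hs⟩ := Module.projective_def.mp ‹Module.Projective R[G] P›
  have hcoeff (n : P) : ∑ g : G, (s x n).coeff g = 0 := by
    rw [← coeff_one_sum_single_one_mul, ← smul_eq_mul, ← Finsupp.smul_apply, ← map_smul, hx,
      map_zero, Finsupp.zero_apply, coeff_zero, Finsupp.zero_apply]
  rw [← hs x, Finsupp.linearCombination_apply, map_finsuppSum]
  exact Finset.sum_eq_zero fun n _ => by simp [map_smul_eq_sum_coeff_smul f hf, hcoeff]

end MonoidAlgebra

namespace Representation

variable {R G M : Type*} [CommRing R] [Group G] [AddCommGroup M] [Module R M]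
  (ρ : Representation R G M)

theorem mem_dual_invariants_iff (f : Module.Dual R M) :
    f ∈ ρ.dual.invariants ↔ ∀ (g : G) (m : M), f (ρ g m) = f m := by
  refine ⟨fun hf g m => ?_, fun hf g => LinearMap.ext fun m => hf g⁻¹ m⟩
  simpa [Module.Dual.transpose_apply] using LinearMap.congr_fun (hf g⁻¹) m

variable [Fintype G]

theorem asModuleEquiv_sum_single_one_smul (v : ρ.asModule) :
    ρ.asModuleEquiv ((∑ g : G, single g (1 : R)) • v) = ρ.norm (ρ.asModuleEquiv v) := by
  simp [asModuleEquiv_map_smul, asAlgebraHom_single, norm]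

noncomputable def normToInvariants : M →ₗ[R] ρ.invariants :=
  ρ.norm.codRestrict ρ.invariants fun m => (ρ.mem_invariants _).mpr fun g => ρ.self_norm_apply g m

theorem coe_normToInvariants (m : M) : (ρ.normToInvariants m : M) = ∑ g : G, ρ g m :=
  LinearMap.sum_apply _ _ _

theorem normToInvariants_self_apply (g : G) (m : M) :
    ρ.normToInvariants (ρ g m) = ρ.normToInvariants m :=
  Subtype.ext (ρ.norm_self_apply g m)

variable [Module.Projective R[G] ρ.asModule]

theorem normToInvariants_surjective : Function.Surjective ρ.normToInvariants := by
  rintro ⟨x, hx⟩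
  obtain ⟨y, hy⟩ := exists_sum_single_one_smul_eq (ρ.asModuleEquiv.symm x) fun g => by
    rw [single_smul, one_smul, LinearEquiv.apply_symm_apply, hx g]; rfl
  refine ⟨ρ.asModuleEquiv y, Subtype.ext ?_⟩
  rw [normToInvariants, LinearMap.codRestrict_apply, ← asModuleEquiv_sum_single_one_smul, hy,
    LinearEquiv.apply_symm_apply]

theorem ker_normToInvariants_le {f : Module.Dual R M} (hf : f ∈ ρ.dual.invariants) :
    LinearMap.ker ρ.normToInvariants ≤ LinearMap.ker f := by
  intro m hm
  have hinv := (ρ.mem_dual_invariants_iff f).mp hf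
  have hnorm : (∑ g : G, single g (1 : R)) • ρ.asModuleEquiv.symm m = 0 := by
    apply ρ.asModuleEquiv.injective
    rw [asModuleEquiv_sum_single_one_smul, LinearEquiv.apply_symm_apply, map_zero]
    exact congr_arg Subtype.val hm
  simpa using map_eq_zero_of_sum_single_one_smul_eq_zero (f ∘ₗ ρ.asModuleEquiv.toLinearMap)
    (fun g y => by
      rw [LinearMap.comp_apply, LinearEquiv.coe_coe, single_smul, one_smul]; exact hinv g _) hnorm

theorem range_dualMap_normToInvariants :
    LinearMap.range ρ.normToInvariants.dualMap = ρ.dual.invariants := by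
  refine le_antisymm ?_ ?_
  · rintro _ ⟨φ, rfl⟩
    refine (ρ.mem_dual_invariants_iff _).mpr fun g m => ?_
    simp [normToInvariants_self_apply]
  · intro f hf
    rw [LinearMap.range_dualMap_eq_dualAnnihilator_ker_of_surjective _
      ρ.normToInvariants_surjective, Submodule.mem_dualAnnihilator]
    exact fun m hm => ρ.ker_normToInvariants_le hf hm

noncomputable def dualInvariantsEquiv : ρ.dual.invariants ≃ₗ[R] Module.Dual R ρ.invariants :=
  ((LinearEquiv.ofInjective _ (LinearMap.dualMap_injective_of_surjective
    ρ.normToInvariants_surjective)).trans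
    (LinearEquiv.ofEq _ _ ρ.range_dualMap_normToInvariants)).symm

theorem dualInvariantsEquiv_apply_normToInvariants (f : ρ.dual.invariants) (m : M) :
    ρ.dualInvariantsEquiv f (ρ.normToInvariants m) = (f : Module.Dual R M) m :=
  congr_arg (fun f : ρ.dual.invariants => (f : Module.Dual R M) m)
    (ρ.dualInvariantsEquiv.symm_apply_apply f)

end Representation

theorem dual_invariants_equiv_dual_of_invariants_general
    {R : Type*} [CommRing R]
    {G : Type*} [Group G] [Fintype G]
    {M : Type*} [AddCommGroup M] [Module R M]
    (ρ : Representation R G M)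
    (hprojRG : Module.Projective (MonoidAlgebra R G) ρ.asModule) :
    (∀ f ∈ ρ.dual.invariants, ∃! f' : ρ.invariants →ₗ[R] R,
        ∀ (m : M) (x : ρ.invariants), (x : M) = ∑ g : G, ρ g m → f' x = f m) ∧
    ∃ e : ρ.dual.invariants ≃ₗ[R] (ρ.invariants →ₗ[R] R),
        ∀ (f : ρ.dual.invariants) (m : M) (x : ρ.invariants),
          (x : M) = ∑ g : G, ρ g m → e f x = (f : Module.Dual R M) m := by
  have eq_norm (m : M) (x : ρ.invariants) (hxm : (x : M) = ∑ g : G, ρ g m) :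
      x = ρ.normToInvariants m :=
    Subtype.ext (hxm.trans (ρ.coe_normToInvariants m).symm)
  have he (f : ρ.dual.invariants) (m : M) (x : ρ.invariants) (hxm : (x : M) = ∑ g : G, ρ g m) :
      ρ.dualInvariantsEquiv f x = (f : Module.Dual R M) m := by
    rw [eq_norm m x hxm, ρ.dualInvariantsEquiv_apply_normToInvariants]
  refine ⟨fun f hf => ⟨ρ.dualInvariantsEquiv ⟨f, hf⟩, he ⟨f, hf⟩, fun f' hf' => ?_⟩,
    ρ.dualInvariantsEquiv, he⟩
  ext x
  obtain ⟨m, rfl⟩ := ρ.normToInvariants_surjective x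
  rw [hf' m _ (ρ.coe_normToInvariants m), ρ.dualInvariantsEquiv_apply_normToInvariants]

/-- Let `R` be an integral domain, `G` a finite group, and `M` an `R[G]`-module,
finitely generated projective over `R` and projective over `R[G]`.  With `G` acting on
`Hom_R(M, R)` by `(g•f)(m) = f(g⁻¹•m)`, every `G`-invariant `f` gives a unique functional `f'`
on `M^G` with `f'(σ•m) = f(m)`, and `f ↦ f'` is an `R`-module isomorphism
`(Hom_R(M,R))^G ≅ Hom_R(M^G, R)`. -/
theorem dual_invariants_equiv_dual_of_invariants
    {R : Type*} [CommRing R] [IsDomain R]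
    {G : Type*} [Group G] [Fintype G]
    {M : Type*} [AddCommGroup M] [Module R M]
    (ρ : Representation R G M)
    (hfin : Module.Finite R M) (hprojR : Module.Projective R M)
    (hprojRG : Module.Projective (MonoidAlgebra R G) ρ.asModule) :
    (∀ f ∈ ρ.dual.invariants, ∃! f' : ρ.invariants →ₗ[R] R,
        ∀ (m : M) (x : ρ.invariants), (x : M) = ∑ g : G, ρ g m → f' x = f m) ∧
    ∃ e : ρ.dual.invariants ≃ₗ[R] (ρ.invariants →ₗ[R] R),
        ∀ (f : ρ.dual.invariants) (m : M) (x : ρ.invariants),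
          (x : M) = ∑ g : G, ρ g m → e f x = (f : Module.Dual R M) m :=
  dual_invariants_equiv_dual_of_invariants_general ρ hprojRG
end

section
/- Let R be an integral domain, G a finite group, and (E, q) a symmetric bundle over R: E is a finitely generated projective R-module and q is a symmetric bilinear form whose adjoint E → Hom_R(E, R) is bijective. Let ρ : G → O(q) be an orthogonal representation. Equip Map(G, R) with the G-action (u•f)(g) = f(gu) and the form μ_G(f, f') = Σ_{g∈G} f(g)f'(g), let G act diagonally on E ⊗_R Map(G, R), and let t = q ⊗ μ_G. Then the map γ : (E ⊗_R Map(G, R))^G → E sending an invariant element x to ν(x)(1), where ν(e ⊗ f) = (g ↦ f(g)·ρ(g)e), is an R-module isomorphism, and it is an isometry: t^G(x, y) = q(γ(x), γ(y)) for all invariants x, y, where t^G is the bilinear form on the invariants characterized by t^G(σ•m, y) = t(m, y) for all m ∈ E ⊗_R Map(G, R) and invariant y. -/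
open scoped TensorProduct

/-- The representation of `G` on the space of functions `G → V` given by
`(u • f)(g) = f (g * u)`. -/
def shiftRep (R G V : Type*) [CommRing R] [Group G] [AddCommGroup V] [Module R V] :
    Representation R G (G → V) where
  toFun u :=
    { toFun := fun f g => f (g * u)
      map_add' := fun f₁ f₂ => rfl
      map_smul' := fun r f => rfl }
  map_one' := by
    ext f g
    simp
  map_mul' u v := by
    ext f g
    simp [mul_assoc]

section aux
variable {R G E : Type*} [CommRing R] [Group G] [Fintype G] [DecidableEq G]
  [AddCommGroup E] [Module R E] (ρ : Representation R G E)

noncomputable def deltaAux : E →ₗ[R] E ⊗[R] (G → R) :=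
  ∑ g : G, ((TensorProduct.mk R E (G → R)).flip (Pi.single g 1)).comp (ρ g⁻¹)

lemma deltaAux_apply (e : E) :
    deltaAux ρ e = ∑ g : G, (ρ g⁻¹ e) ⊗ₜ[R] (Pi.single g 1 : G → R) := by
  simp [deltaAux]

noncomputable def muAux : (G → E) →ₗ[R] E ⊗[R] (G → R) :=
  ∑ g : G, ((TensorProduct.mk R E (G → R)).flip (Pi.single g 1)).comp
    ((ρ g⁻¹).comp (LinearMap.proj g))

lemma muAux_apply (φ : G → E) :
    muAux ρ φ = ∑ g : G, (ρ g⁻¹ (φ g)) ⊗ₜ[R] (Pi.single g 1 : G → R) := by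
  simp [muAux]

lemma shift_single (u g : G) :
    (shiftRep R G R) u (Pi.single g 1) = Pi.single (g * u⁻¹) (1 : R) := by
  funext h
  show (Pi.single g 1 : G → R) (h * u) = _
  rw [Pi.single_apply, Pi.single_apply]
  congr 1
  simp only [eq_iff_iff]
  exact (eq_mul_inv_iff_mul_eq (b := g)).symm

end aux

/-- Let `R` be an integral domain, `G` a finite group, `(E, q)` a symmetric
bundle over `R`, and `ρ : G → O(q)` an orthogonal representation.  Equip `Map(G, R)` with the
action `(u•f)(g) = f(gu)` and the form `μ_G(f, f') = ∑_g f(g)f'(g)`, let `t = q ⊗ μ_G` on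
`E ⊗_R Map(G, R)` with the diagonal `G`-action, let `t^G` be the descended form on the
invariants (characterized by `t^G(σ•m, y) = t(m, y)`), and let `ν` be the map determined by
`ν(e ⊗ f) = (g ↦ f(g) • ρ(g)e)`.  Then `γ : x ↦ ν(x)(1)` is an `R`-module isomorphism from
`(E ⊗_R Map(G, R))^G` onto `E` which is an isometry: `t^G(x, y) = q(γ(x), γ(y))`. -/
theorem twist_of_trivial_torsor_isometric_to_E
    {R : Type*} [CommRing R] [IsDomain R]
    {G : Type*} [Group G] [Fintype G]
    {E : Type*} [AddCommGroup E] [Module R E]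
    (hEfin : Module.Finite R E) (hEproj : Module.Projective R E)
    (q : E →ₗ[R] E →ₗ[R] R)
    (hqsymm : ∀ x y : E, q x y = q y x)
    (hqnd : Function.Bijective q)
    (ρ : Representation R G E)
    (hρ : ∀ (g : G) (x y : E), q (ρ g x) (ρ g y) = q x y)
    (t : (E ⊗[R] (G → R)) →ₗ[R] (E ⊗[R] (G → R)) →ₗ[R] R)
    (ht : ∀ (e e' : E) (f f' : G → R),
      t (e ⊗ₜ[R] f) (e' ⊗ₜ[R] f') = q e e' * ∑ g : G, f g * f' g)
    (tG : ((ρ.tprod (shiftRep R G R)).invariants) →ₗ[R]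
          ((ρ.tprod (shiftRep R G R)).invariants) →ₗ[R] R)
    (htG : ∀ (m : E ⊗[R] (G → R)) (x y : (ρ.tprod (shiftRep R G R)).invariants),
      (x : E ⊗[R] (G → R)) = ∑ g : G, (ρ.tprod (shiftRep R G R)) g m → tG x y = t m y)
    (ν : (E ⊗[R] (G → R)) →ₗ[R] (G → E))
    (hν : ∀ (e : E) (f : G → R) (g : G), ν (e ⊗ₜ[R] f) g = f g • ρ g e) :
    ∃ γ : ((ρ.tprod (shiftRep R G R)).invariants) ≃ₗ[R] E,
      (∀ x : (ρ.tprod (shiftRep R G R)).invariants, γ x = ν (x : E ⊗[R] (G → R)) 1) ∧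
      ∀ x y : (ρ.tprod (shiftRep R G R)).invariants, tG x y = q (γ x) (γ y) := by
  classical
  set A := ρ.tprod (shiftRep R G R) with hA
  -- action on pure tensors
  have hAapp : ∀ (u : G) (e : E) (f : G → R),
      A u (e ⊗ₜ[R] f) = (ρ u e) ⊗ₜ[R] ((shiftRep R G R) u f) := by
    intro u e f
    simp [hA, Representation.tprod_apply]
  have hρρ : ∀ (g h : G) (e : E), ρ g (ρ h e) = ρ (g * h) e := by
    intro g h e
    rw [map_mul]; rfl
  -- ν intertwines the action with right translation
  have hnu_comm : ∀ (u : G) (m : E ⊗[R] (G → R)) (g : G),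
      ν (A u m) g = ν m (g * u) := by
    intro u m g
    induction m using TensorProduct.induction_on with
    | zero => simp
    | tmul e f =>
        rw [hAapp, hν, hν]
        show f (g * u) • ρ g (ρ u e) = f (g * u) • ρ (g * u) e
        rw [map_mul]; rfl
    | add m₁ m₂ h₁ h₂ => simp [map_add, h₁, h₂]
  -- ν of deltaAux is constant
  have hnu_delta : ∀ (e : E) (g : G), ν (deltaAux ρ e) g = e := by
    intro e g
    rw [deltaAux_apply, map_sum]
    simp only [Finset.sum_apply, hν, Pi.single_apply]
    rw [Finset.sum_eq_single g]
    · simp [hρρ]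
    · intro b _ hb; simp [Ne.symm hb]
    · intro h; exact absurd (Finset.mem_univ g) h
  -- muAux is a left inverse of ν
  have hmu_nu : ∀ m : E ⊗[R] (G → R), muAux ρ (ν m) = m := by
    intro m
    induction m using TensorProduct.induction_on with
    | zero => simp
    | tmul e f =>
        rw [muAux_apply]
        have : ∀ g : G, (ρ g⁻¹ (ν (e ⊗ₜ[R] f) g)) ⊗ₜ[R] (Pi.single g 1 : G → R)
            = e ⊗ₜ[R] (f g • (Pi.single g 1 : G → R)) := by
          intro g
          rw [hν, map_smul]
          have h2 : ρ g⁻¹ (ρ g e) = e := by rw [hρρ]; simp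
          rw [h2, TensorProduct.smul_tmul]
        rw [Finset.sum_congr rfl fun g _ => this g, ← TensorProduct.tmul_sum]
        congr 1
        funext h
        simp [Pi.single_apply, Finset.sum_ite_eq]
    | add m₁ m₂ h₁ h₂ => simp [map_add, h₁, h₂]
  -- deltaAux lands in invariants
  have hmem : ∀ e : E, deltaAux ρ e ∈ A.invariants := by
    intro e
    rw [Representation.mem_invariants]
    intro u
    rw [deltaAux_apply, map_sum]
    rw [show ∑ g : G, A u ((ρ g⁻¹ e) ⊗ₜ[R] (Pi.single g 1 : G → R))
        = ∑ g : G, (ρ (g * u⁻¹)⁻¹ e) ⊗ₜ[R] (Pi.single (g * u⁻¹) 1 : G → R) from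
      Finset.sum_congr rfl fun g _ => by
        rw [hAapp, shift_single, hρρ]
        congr 2
        group]
    exact Fintype.sum_equiv (Equiv.mulRight u⁻¹) _ _ (fun g => rfl)
  -- γ₀
  set γ₀ : A.invariants →ₗ[R] E :=
    ((LinearMap.proj (1 : G)).comp ν).comp (A.invariants.subtype) with hγ₀
  have hγ₀app : ∀ x : A.invariants, γ₀ x = ν (x : E ⊗[R] (G → R)) 1 := fun x => rfl
  set δE : E →ₗ[R] A.invariants := (deltaAux ρ).codRestrict A.invariants hmem with hδE
  -- ν of an invariant is constant
  have hconst : ∀ (x : A.invariants) (g : G), ν (x : E ⊗[R] (G → R)) g = γ₀ x := by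
    intro x g
    have := hnu_comm g (x : E ⊗[R] (G → R)) 1
    rw [x.2 g] at this
    rw [hγ₀app]
    simpa using this.symm
  -- δ ∘ γ₀ = id
  have hsec : ∀ x : A.invariants, deltaAux ρ (γ₀ x) = (x : E ⊗[R] (G → R)) := by
    intro x
    have hν_eq : ν (deltaAux ρ (γ₀ x)) = ν (x : E ⊗[R] (G → R)) := by
      funext g
      rw [hnu_delta, hconst]
    calc deltaAux ρ (γ₀ x) = muAux ρ (ν (deltaAux ρ (γ₀ x))) := (hmu_nu _).symm
      _ = muAux ρ (ν (x : E ⊗[R] (G → R))) := by rw [hν_eq]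
      _ = x := hmu_nu _
  set γ : A.invariants ≃ₗ[R] E := LinearEquiv.ofLinear γ₀ δE
    (by
      ext e
      show γ₀ (δE e) = e
      have : ((δE e : A.invariants) : E ⊗[R] (G → R)) = deltaAux ρ e := rfl
      rw [hγ₀app, this, hnu_delta])
    (by
      apply LinearMap.ext
      intro x
      exact Subtype.ext (hsec x)) with hγ
  refine ⟨γ, fun x => hγ₀app x, ?_⟩
  intro x y
  -- the key m
  have hsum : ∑ g : G, A g ((γ₀ x) ⊗ₜ[R] (Pi.single (1 : G) 1 : G → R))
      = deltaAux ρ (γ₀ x) := by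
    rw [show ∑ g : G, A g ((γ₀ x) ⊗ₜ[R] (Pi.single (1 : G) 1 : G → R))
        = ∑ g : G, (ρ g⁻¹⁻¹ (γ₀ x)) ⊗ₜ[R] (Pi.single g⁻¹ 1 : G → R) from
      Finset.sum_congr rfl fun g _ => by rw [hAapp, shift_single, one_mul]; simp]
    rw [deltaAux_apply]
    exact Fintype.sum_equiv (Equiv.inv G) _ _ (fun g => rfl)
  have hx : (x : E ⊗[R] (G → R))
      = ∑ g : G, A g ((γ₀ x) ⊗ₜ[R] (Pi.single (1 : G) 1 : G → R)) := by
    rw [hsum, hsec]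
  have ht1 : ∀ (e : E) (m : E ⊗[R] (G → R)),
      t (e ⊗ₜ[R] (Pi.single (1 : G) 1 : G → R)) m = q e (ν m 1) := by
    intro e m
    induction m using TensorProduct.induction_on with
    | zero => simp
    | tmul e' f' =>
        rw [ht]
        have h3 : ∑ g : G, (Pi.single (1 : G) (1:R) : G → R) g * f' g = f' 1 := by
          simp [Pi.single_apply, ite_mul, Finset.sum_ite_eq]
        rw [h3]
        simp [hν, mul_comm]
    | add m₁ m₂ h₁ h₂ => simp [map_add, h₁, h₂]
  rw [htG _ x y hx, ht1]
  have : ν (y : E ⊗[R] (G → R)) 1 = γ₀ y := hconst y 1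
  rw [this]
  rfl
end

section
/- Let R be an integral domain, e a positive integer invertible in R, I a cyclic group of order e, and χ : I → Rˣ an injective group homomorphism. Let J be a subgroup of I of order e', and let R[I/J] be the permutation module: the free R-module on the coset space I/J with I acting by translation on cosets. Then, for every integer k with 0 ≤ k < e, the χ^k-isotypic component {m ∈ R[I/J] : u•m = χ(u)^k·m for all u ∈ I} is a free R-module of rank 1 if e' divides k, and is the zero module otherwise. -/
/-- The `χᵏ`-isotypic component of the permutation module `R[I/J]`: the submodule of
elements `m` with `u • m = χ(u)ᵏ • m` for all `u ∈ I`, where `I` acts on the coset space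
`I ⧸ J` by translation. -/
def isotypic (R : Type*) [CommRing R] {I : Type*} [Group I] (J : Subgroup I)
    (χ : I →* Rˣ) (k : ℕ) : Submodule R ((I ⧸ J) →₀ R) where
  carrier := {m | ∀ u : I,
    Finsupp.lmapDomain R R (fun c : I ⧸ J => u • c) m = ((χ u : R)) ^ k • m}
  add_mem' := by
    intro a b ha hb u
    rw [map_add, ha u, hb u, smul_add]
  zero_mem' := by
    intro u
    rw [map_zero, smul_zero]
  smul_mem' := by
    intro r m hm u
    rw [map_smul, hm u, smul_comm]

/-- Let `R` be an integral domain, `e` a positive integer invertible in `R`,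
`I` a cyclic group of order `e`, `χ : I → Rˣ` an injective character, and `J ≤ I` a subgroup
of order `e'`.  For `0 ≤ k < e`, the `χᵏ`-isotypic component of the permutation module
`R[I/J]` is free of rank `1` if `e' ∣ k`, and zero otherwise. -/
theorem isotypic_component_of_permutation_module
    {R : Type*} [CommRing R] [IsDomain R]
    {I : Type*} [Group I] [Fintype I] (hcyc : IsCyclic I)
    (e : ℕ) (he : 0 < e) (hcard : Fintype.card I = e) (heR : IsUnit (e : R))
    (χ : I →* Rˣ) (hχ : Function.Injective χ)
    (J : Subgroup I) (e' : ℕ) (he' : Nat.card J = e')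
    (k : ℕ) (hk : k < e) :
    (e' ∣ k → Nonempty (↥(isotypic R J χ k) ≃ₗ[R] R)) ∧
    (¬ e' ∣ k → isotypic R J χ k = ⊥) := by
  classical
  subst he'
  letI : Fintype (I ⧸ J) := Fintype.ofFinite _
  have hcomm : ∀ a b : I, a * b = b * a := by
    letI := hcyc.commGroup
    exact fun a b => mul_comm a b
  constructor
  · -- free of rank one case
    intro hdvd
    have hJk : ∀ j ∈ J, (χ j) ^ k = 1 := by
      intro j hj
      have h1 : orderOf j ∣ k := by
        have h0 := orderOf_dvd_natCard (⟨j, hj⟩ : J)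
        rw [Subgroup.orderOf_mk] at h0
        exact h0.trans hdvd
      rw [← map_pow, orderOf_dvd_iff_pow_eq_one.mp h1, map_one]
    set φ : I ⧸ J → R := fun c => Quotient.liftOn' c (fun g => ((((χ g) ^ k)⁻¹ : Rˣ) : R))
      (by
        intro a b hab
        rw [QuotientGroup.leftRel_apply] at hab
        have hb : b = a * (a⁻¹ * b) := by group
        rw [hb, map_mul, mul_pow, hJk _ hab, mul_one]) with hφ
    have hφmk : ∀ g : I, φ (QuotientGroup.mk g) = ((((χ g) ^ k)⁻¹ : Rˣ) : R) := fun g => rfl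
    set v : (I ⧸ J) →₀ R := Finsupp.equivFunOnFinite.symm φ with hvdef
    have hv : ∀ c, v c = φ c := fun c => rfl
    have hvmem : v ∈ isotypic R J χ k := by
      intro u
      ext c
      obtain ⟨c0, rfl⟩ : ∃ c0 : I ⧸ J, u • c0 = c := ⟨u⁻¹ • c, smul_inv_smul u c⟩
      induction c0 using QuotientGroup.induction_on with
      | H g =>
        rw [Finsupp.lmapDomain_apply, Finsupp.mapDomain_apply (MulAction.injective u),
          Finsupp.smul_apply]
        have hug : u • (QuotientGroup.mk g : I ⧸ J) = QuotientGroup.mk (u * g) := rfl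
        rw [hug, hv, hv, hφmk, hφmk, ← Units.val_pow_eq_pow_val, smul_eq_mul, ← Units.val_mul]
        congr 1
        rw [map_mul, mul_pow, mul_inv, ← mul_assoc, mul_inv_cancel, one_mul]
    have hdet : ∀ m ∈ isotypic R J χ k, m (QuotientGroup.mk 1) = 0 → m = 0 := by
      intro m hm h1
      ext c
      induction c using QuotientGroup.induction_on with
      | H g =>
        have h2 := congrArg (fun f : (I ⧸ J) →₀ R => f (g • (QuotientGroup.mk (1 : I)))) (hm g)
        simp only [Finsupp.lmapDomain_apply] at h2
        rw [Finsupp.mapDomain_apply (MulAction.injective g), h1, Finsupp.smul_apply] at h2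
        have hgc : g • (QuotientGroup.mk (1 : I) : I ⧸ J) = QuotientGroup.mk g := by
          show QuotientGroup.mk (g * 1) = _
          rw [mul_one]
        rw [hgc] at h2
        rw [smul_eq_mul, ← Units.val_pow_eq_pow_val] at h2
        have h3 := (Units.mul_right_eq_zero (u := (χ g) ^ k)).mp h2.symm
        simpa using h3
    set F : (isotypic R J χ k) →ₗ[R] R :=
      (Finsupp.lapply (QuotientGroup.mk (1 : I))).comp (isotypic R J χ k).subtype with hF
    have hinj : Function.Injective F := by
      intro a b hab
      have hsub := hdet _ (a - b).2 (by
        show ((a - b : isotypic R J χ k) : (I ⧸ J) →₀ R) (QuotientGroup.mk (1 : I)) = 0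
        rw [Submodule.coe_sub, Finsupp.sub_apply, sub_eq_zero]
        exact hab)
      exact sub_eq_zero.mp (Subtype.ext hsub)
    have hsurj : Function.Surjective F := by
      intro r
      refine ⟨⟨r • v, (isotypic R J χ k).smul_mem r hvmem⟩, ?_⟩
      show (r • v) (QuotientGroup.mk (1 : I)) = r
      rw [Finsupp.smul_apply, hv, hφmk]
      simp
    exact ⟨LinearEquiv.ofBijective F ⟨hinj, hsurj⟩⟩
  · -- zero case
    intro hndvd
    obtain ⟨h, hgen⟩ := (inferInstance : IsCyclic J).exists_generator
    have horder : orderOf h = Nat.card J := by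
      exact orderOf_eq_card_of_forall_mem_zpowers hgen
    have hne : ((χ (h : I) : R)) ^ k ≠ 1 := by
      intro hEq
      have hU : (χ (h : I)) ^ k = 1 := by
        apply Units.ext
        rw [Units.val_pow_eq_pow_val, hEq, Units.val_one]
      have hdvd : orderOf (χ (h : I)) ∣ k := orderOf_dvd_of_pow_eq_one hU
      rw [orderOf_injective χ hχ, Subgroup.orderOf_coe, horder] at hdvd
      exact hndvd hdvd
    rw [eq_bot_iff]
    intro m hm
    have hfix : ∀ c : I ⧸ J, (h : I) • c = c := by
      intro c
      induction c using QuotientGroup.induction_on with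
      | H g =>
        show QuotientGroup.mk ((h : I) * g) = QuotientGroup.mk g
        rw [hcomm]
        exact QuotientGroup.mk_mul_of_mem g h.2
    have h2 := hm (h : I)
    rw [Finsupp.lmapDomain_apply] at h2
    rw [Finsupp.mapDomain_congr (g := id) (fun x _ => hfix x), Finsupp.mapDomain_id] at h2
    have h3 : (((χ (h : I) : R)) ^ k - 1) • m = 0 := by
      rw [sub_smul, one_smul, sub_eq_zero]
      exact h2.symm
    rcases smul_eq_zero.mp h3 with h4 | h4
    · exact absurd (sub_eq_zero.mp h4) hne
    · simp [h4]
end
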